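/- Let p, q : (0,1) → ℝ be nonnegative integrable functions such that: p and q are symmetric (p(x) = p(1-x) and q(x) = q(1-x) for all x ∈ (0,1)); p is non-decreasing on (0, 1/2]; q is convex on (0, 1/2]; q(x) → 0 as x → 0⁺ (with q extended by q(0) = 0); and ∫₀¹ q(x) dx = 1. Then for every concave integrable function φ : [0,1] → ℝ with φ(0) + φ(1) ≥ 0, one has ∫₀¹ p(x)φ(x) dx ≤ (∫₀¹ φ(x) dx) · (∫₀¹ p(x)q(x) dx). -/

import Mathlib

open MeasureTheory Set Filter Topology

/-!
Replacing `φ` by its symmetrization `ψ x = (φ x + φ (1 - x)) / 2` changes neither side, and `ψ`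
is concave and nonnegative. With `c = ∫ ψ`, the function `h = ψ - c q` is symmetric, concave on
`(0, 1/2]`, has integral `0`, and is bounded below by `-c q → 0` at `0⁺`. Concavity then makes
`h` nonnegative on some `(0, x₀)` and nonpositive on `(x₀, 1/2)`, so `(p - p x₀) h ≤ 0` for the
monotone `p`, and integrating gives `∫ p h ≤ p x₀ ∫ h = 0`, that is `∫ p ψ ≤ c ∫ p q`.
-/

lemma integral_Ioo_zero_one_comp_one_sub (f : ℝ → ℝ) :
    ∫ x in Ioo (0:ℝ) 1, f (1 - x) = ∫ x in Ioo (0:ℝ) 1, f x := by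
  simp only [← integral_Ioc_eq_integral_Ioo, ← intervalIntegral.integral_of_le zero_le_one,
    intervalIntegral.integral_comp_sub_left, sub_zero, sub_self]

lemma MeasureTheory.IntegrableOn.comp_one_sub {f : ℝ → ℝ} (hf : IntegrableOn f (Ioo 0 1)) :
    IntegrableOn (fun x => f (1 - x)) (Ioo 0 1) := by
  rw [← intervalIntegrable_iff_integrableOn_Ioo_of_le zero_le_one] at hf ⊢
  simpa using (hf.comp_sub_left 1).symm

lemma integral_Ioo_zero_one_eq_two_mul_of_symm {f : ℝ → ℝ} (hf : IntegrableOn f (Ioo 0 1))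
    (hsymm : ∀ x ∈ Ioo (0:ℝ) 1, f x = f (1 - x)) :
    ∫ x in Ioo (0:ℝ) 1, f x = 2 * ∫ x in Ioo (0:ℝ) (1/2), f x := by
  rw [← intervalIntegrable_iff_integrableOn_Ioo_of_le zero_le_one] at hf
  have hreflect : ∫ x in (1/2:ℝ)..1, f x = ∫ x in (0:ℝ)..(1/2), f x := by
    calc ∫ x in (1/2:ℝ)..1, f x = ∫ x in (1/2:ℝ)..1, f (1 - x) := by
          refine intervalIntegral.integral_congr_ae ?_
          filter_upwards [(countable_singleton (1:ℝ)).ae_notMem volume] with x hx1 hx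
          rw [uIoc_of_le (by norm_num)] at hx
          exact hsymm x ⟨by linarith [hx.1], lt_of_le_of_ne hx.2 hx1⟩
      _ = ∫ x in (0:ℝ)..(1/2), f x := by
          rw [intervalIntegral.integral_comp_sub_left]; norm_num
  simp only [← integral_Ioc_eq_integral_Ioo, ← intervalIntegral.integral_of_le zero_le_one,
    ← intervalIntegral.integral_of_le (by norm_num : (0:ℝ) ≤ 1 / 2)]
  rw [← intervalIntegral.integral_add_adjacent_intervals (b := 1/2)
    (hf.mono_set (uIcc_subset_uIcc_left (by norm_num [uIcc_of_le])))
    (hf.mono_set (uIcc_subset_uIcc_right (by norm_num [uIcc_of_le]))),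
    hreflect, two_mul]

noncomputable def symmetrize (φ : ℝ → ℝ) (x : ℝ) : ℝ := (φ x + φ (1 - x)) / 2

lemma symmetrize_one_sub (φ : ℝ → ℝ) (x : ℝ) : symmetrize φ (1 - x) = symmetrize φ x := by
  simp only [symmetrize, sub_sub_cancel, add_comm]

lemma concaveOn_symmetrize {φ : ℝ → ℝ} (hφ : ConcaveOn ℝ (Icc 0 1) φ) :
    ConcaveOn ℝ (Icc 0 1) (symmetrize φ) := by
  have hreflect : ConcaveOn ℝ (Icc 0 1) (fun x => φ (1 - x)) := by
    have hpre : (AffineMap.const ℝ ℝ (1:ℝ) - AffineMap.id ℝ ℝ) ⁻¹' Icc 0 1 = Icc 0 1 := by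
      ext x
      simp only [mem_preimage, AffineMap.coe_sub, AffineMap.coe_const, AffineMap.coe_id,
        Pi.sub_apply, Function.const_apply, id_eq, mem_Icc]
      constructor <;> rintro ⟨h0, h1⟩ <;> constructor <;> linarith
    have := hφ.comp_affineMap (AffineMap.const ℝ ℝ (1:ℝ) - AffineMap.id ℝ ℝ)
    rwa [hpre] at this
  refine ((hφ.add hreflect).smul (by norm_num : (0:ℝ) ≤ 1 / 2)).congr fun x _ => ?_
  simp only [symmetrize, Pi.add_apply, smul_eq_mul]
  ring

lemma symmetrize_nonneg {φ : ℝ → ℝ} (hφ : ConcaveOn ℝ (Icc 0 1) φ) (hends : 0 ≤ φ 0 + φ 1)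
    {x : ℝ} (hx : x ∈ Icc 0 1) : 0 ≤ symmetrize φ x := by
  have hmin := (concaveOn_symmetrize hφ).min_le_of_mem_Icc (left_mem_Icc.2 zero_le_one)
    (right_mem_Icc.2 zero_le_one) hx
  have hψ0 : symmetrize φ 0 = (φ 0 + φ 1) / 2 := by simp [symmetrize]
  have hψ1 : symmetrize φ 1 = (φ 0 + φ 1) / 2 := by simp [symmetrize, add_comm]
  rw [hψ1, hψ0, min_self] at hmin
  linarith

lemma MeasureTheory.IntegrableOn.mul_symmetrize {p φ : ℝ → ℝ}
    (hp : ∀ x ∈ Ioo (0:ℝ) 1, p x = p (1 - x))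
    (hpφ : IntegrableOn (fun x => p x * φ x) (Ioo 0 1)) :
    IntegrableOn (fun x => p x * symmetrize φ x) (Ioo 0 1) := by
  refine IntegrableOn.congr_fun ((hpφ.add hpφ.comp_one_sub).div_const 2) (fun x hx => ?_)
    measurableSet_Ioo
  simp only [Pi.add_apply, symmetrize, ← hp x hx]
  ring

lemma integral_mul_symmetrize {p φ : ℝ → ℝ} (hp : ∀ x ∈ Ioo (0:ℝ) 1, p x = p (1 - x))
    (hpφ : IntegrableOn (fun x => p x * φ x) (Ioo 0 1)) :
    ∫ x in Ioo (0:ℝ) 1, p x * symmetrize φ x = ∫ x in Ioo (0:ℝ) 1, p x * φ x := by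
  calc ∫ x in Ioo (0:ℝ) 1, p x * symmetrize φ x
      = ∫ x in Ioo (0:ℝ) 1, (p x * φ x + p (1 - x) * φ (1 - x)) / 2 := by
        refine setIntegral_congr_fun measurableSet_Ioo (fun x hx => ?_)
        rw [symmetrize, ← hp x hx]
        ring
    _ = ∫ x in Ioo (0:ℝ) 1, p x * φ x := by
        rw [integral_div, integral_add hpφ hpφ.comp_one_sub,
          integral_Ioo_zero_one_comp_one_sub (fun x => p x * φ x)]
        ring

lemma integrableOn_symmetrize {φ : ℝ → ℝ} (hφ : IntegrableOn φ (Ioo 0 1)) :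
    IntegrableOn (symmetrize φ) (Ioo 0 1) := by
  simpa using IntegrableOn.mul_symmetrize (p := fun _ => 1) (fun _ _ => rfl) (by simpa using hφ)

lemma integral_symmetrize {φ : ℝ → ℝ} (hφ : IntegrableOn φ (Ioo 0 1)) :
    ∫ x in Ioo (0:ℝ) 1, symmetrize φ x = ∫ x in Ioo (0:ℝ) 1, φ x := by
  simpa using integral_mul_symmetrize (p := fun _ => 1) (fun _ _ => rfl) (by simpa using hφ)

lemma ConcaveOn.nonneg_of_lt_of_nonneg {h g : ℝ → ℝ} {a b : ℝ} (hh : ConcaveOn ℝ (Ioc a b) h)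
    (hg_nonneg : ∀ x ∈ Ioc a b, 0 ≤ g x) (hg : Tendsto g (𝓝[>] a) (𝓝 0))
    (hgh : ∀ x ∈ Ioc a b, -g x ≤ h x) {x y : ℝ} (hx : a < x) (hxy : x < y) (hyb : y ≤ b)
    (hy : 0 ≤ h y) : 0 ≤ h x := by
  have hbound : ∀ ε ∈ Ioo a x, -g ε ≤ h x := by
    rintro ε ⟨haε, hεx⟩
    have hε : ε ∈ Ioc a b := ⟨haε, by linarith⟩
    calc -g ε ≤ min (h ε) (h y) := le_min (hgh ε hε) (by linarith [hg_nonneg ε hε])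
      _ ≤ h x := hh.min_le_of_mem_Icc hε ⟨by linarith, hyb⟩ ⟨hεx.le, hxy.le⟩
  simpa using le_of_tendsto hg.neg (eventually_of_mem (Ioo_mem_nhdsGT hx) hbound)

lemma exists_nonneg_Ioo_nonpos_Ioo {h : ℝ → ℝ} {a b : ℝ} (hab : a ≤ b)
    (hdown : ∀ x y, a < x → x < y → y ≤ b → 0 ≤ h y → 0 ≤ h x) :
    ∃ x₀ ∈ Icc a b, (∀ x ∈ Ioo a x₀, 0 ≤ h x) ∧ ∀ x ∈ Ioo x₀ b, h x ≤ 0 := by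
  set S := insert a {y ∈ Ioc a b | 0 ≤ h y}
  have hS_le : ∀ y ∈ S, y ≤ b := by
    rintro y (rfl | hy)
    exacts [hab, hy.1.2]
  have hS_bdd : BddAbove S := ⟨b, hS_le⟩
  have ha : a ≤ sSup S := le_csSup hS_bdd (mem_insert a _)
  refine ⟨sSup S, ⟨ha, csSup_le ⟨a, mem_insert a _⟩ hS_le⟩,
    fun x hx => ?_, fun x hx => ?_⟩
  · obtain ⟨y, hy, hxy⟩ := exists_lt_of_lt_csSup ⟨a, mem_insert a _⟩ hx.2
    rcases hy with rfl | hy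
    · exact absurd hx.1 hxy.not_gt
    · exact hdown x y hx.1 hxy hy.1.2 hy.2
  · by_contra! hpos
    have hxS : x ∈ S := mem_insert_of_mem a ⟨⟨ha.trans_lt hx.1, hx.2.le⟩, hpos.le⟩
    exact hx.1.not_ge (le_csSup hS_bdd hxS)

lemma setIntegral_mul_nonpos_of_sign_change {p h : ℝ → ℝ} {a b x₀ : ℝ} (hx₀ : x₀ ∈ Icc a b)
    (hp : MonotoneOn p (Ioc a b)) (hh_pos : ∀ x ∈ Ioo a x₀, 0 ≤ h x)
    (hh_neg : ∀ x ∈ Ioo x₀ b, h x ≤ 0) (hh_int : IntegrableOn h (Ioo a b))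
    (hph_int : IntegrableOn (fun x => p x * h x) (Ioo a b)) (hh_zero : ∫ x in Ioo a b, h x = 0) :
    ∫ x in Ioo a b, p x * h x ≤ 0 := by
  rcases hx₀.1.eq_or_lt with rfl | hax₀
  · have hh_ae : h =ᵐ[volume.restrict (Ioo a b)] 0 := by
      have := (setIntegral_eq_zero_iff_of_nonneg_ae
        ((ae_restrict_mem measurableSet_Ioo).mono fun x hx => neg_nonneg.2 (hh_neg x hx))
        hh_int.neg).1 (by rw [integral_neg, hh_zero, neg_zero])
      filter_upwards [this] with x hx
      simpa using hx
    calc ∫ x in Ioo a b, p x * h x = ∫ _ in Ioo a b, (0:ℝ) :=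
          integral_congr_ae (hh_ae.mono fun x hx => by simp [hx])
      _ ≤ 0 := by simp
  · have hx₀' : x₀ ∈ Ioc a b := ⟨hax₀, hx₀.2⟩
    have hsign : ∀ x ∈ Ioo a b, (p x - p x₀) * h x ≤ 0 := by
      intro x hx
      rcases lt_trichotomy x x₀ with hlt | rfl | hgt
      · exact mul_nonpos_of_nonpos_of_nonneg
          (sub_nonpos.2 (hp ⟨hx.1, hx.2.le⟩ hx₀' hlt.le)) (hh_pos x ⟨hx.1, hlt⟩)
      · simp
      · exact mul_nonpos_of_nonneg_of_nonpos
          (sub_nonneg.2 (hp hx₀' ⟨hx.1, hx.2.le⟩ hgt.le)) (hh_neg x ⟨hgt, hx.2⟩)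
    have hsplit : ∫ x in Ioo a b, (p x - p x₀) * h x = ∫ x in Ioo a b, p x * h x := by
      simp only [sub_mul]
      rw [integral_sub hph_int (hh_int.const_mul _), integral_const_mul, hh_zero, mul_zero,
        sub_zero]
    exact hsplit ▸ setIntegral_nonpos measurableSet_Ioo hsign

lemma setIntegral_mul_nonpos_of_symm_of_concaveOn {p h g : ℝ → ℝ}
    (hp_symm : ∀ x ∈ Ioo (0:ℝ) 1, p x = p (1 - x)) (hh_symm : ∀ x ∈ Ioo (0:ℝ) 1, h x = h (1 - x))
    (hp_mono : MonotoneOn p (Ioc 0 (1/2))) (hh_conc : ConcaveOn ℝ (Ioc 0 (1/2)) h)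
    (hg_nonneg : ∀ x ∈ Ioc 0 (1/2), 0 ≤ g x) (hg : Tendsto g (𝓝[>] 0) (𝓝 0))
    (hgh : ∀ x ∈ Ioc 0 (1/2), -g x ≤ h x) (hh_int : IntegrableOn h (Ioo 0 1))
    (hph_int : IntegrableOn (fun x => p x * h x) (Ioo 0 1))
    (hh_zero : ∫ x in Ioo (0:ℝ) 1, h x = 0) :
    ∫ x in Ioo (0:ℝ) 1, p x * h x ≤ 0 := by
  have hsub : Ioo (0:ℝ) (1/2) ⊆ Ioo 0 1 := Ioo_subset_Ioo_right (by norm_num)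
  have hh_half : ∫ x in Ioo (0:ℝ) (1/2), h x = 0 := by
    linarith [integral_Ioo_zero_one_eq_two_mul_of_symm hh_int hh_symm]
  obtain ⟨x₀, hx₀, hpos, hneg⟩ := exists_nonneg_Ioo_nonpos_Ioo (by norm_num : (0:ℝ) ≤ 1/2)
    fun x y hx hxy hy => hh_conc.nonneg_of_lt_of_nonneg hg_nonneg hg hgh hx hxy hy
  rw [integral_Ioo_zero_one_eq_two_mul_of_symm hph_int
    fun x hx => by rw [← hp_symm x hx, ← hh_symm x hx]]
  exact mul_nonpos_of_nonneg_of_nonpos zero_le_two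
    (setIntegral_mul_nonpos_of_sign_change hx₀ hp_mono hpos hneg (hh_int.mono_set hsub)
      (hph_int.mono_set hsub) hh_half)

lemma setIntegral_mul_le_of_symm_of_concaveOn {p q ψ : ℝ → ℝ}
    (hp_symm : ∀ x ∈ Ioo (0:ℝ) 1, p x = p (1 - x)) (hq_symm : ∀ x ∈ Ioo (0:ℝ) 1, q x = q (1 - x))
    (hψ_symm : ∀ x ∈ Ioo (0:ℝ) 1, ψ x = ψ (1 - x)) (hp_mono : MonotoneOn p (Ioc 0 (1/2)))
    (hq_conv : ConvexOn ℝ (Ioc 0 (1/2)) q) (hψ_conc : ConcaveOn ℝ (Ioc 0 (1/2)) ψ)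
    (hq_nonneg : ∀ x ∈ Ioo (0:ℝ) 1, 0 ≤ q x) (hψ_nonneg : ∀ x ∈ Ioo (0:ℝ) 1, 0 ≤ ψ x)
    (hq_lim : Tendsto q (𝓝[>] 0) (𝓝 0)) (hq_one : ∫ x in Ioo (0:ℝ) 1, q x = 1)
    (hq_int : IntegrableOn q (Ioo 0 1)) (hψ_int : IntegrableOn ψ (Ioo 0 1))
    (hpq_int : IntegrableOn (fun x => p x * q x) (Ioo 0 1))
    (hpψ_int : IntegrableOn (fun x => p x * ψ x) (Ioo 0 1)) :
    ∫ x in Ioo (0:ℝ) 1, p x * ψ x ≤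
      (∫ x in Ioo (0:ℝ) 1, ψ x) * ∫ x in Ioo (0:ℝ) 1, p x * q x := by
  set c := ∫ x in Ioo (0:ℝ) 1, ψ x
  have hc : 0 ≤ c := setIntegral_nonneg measurableSet_Ioo hψ_nonneg
  have hhalf : Ioc (0:ℝ) (1/2) ⊆ Ioo 0 1 := fun x hx => ⟨hx.1, hx.2.trans_lt (by norm_num)⟩
  have hpψq_int : IntegrableOn (fun x => p x * (ψ x - c * q x)) (Ioo 0 1) := by
    refine IntegrableOn.congr_fun (hpψ_int.sub (hpq_int.const_mul c)) (fun x _ => ?_)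
      measurableSet_Ioo
    simp only [Pi.sub_apply]
    ring
  have hkey : ∫ x in Ioo (0:ℝ) 1, p x * (ψ x - c * q x) ≤ 0 := by
    refine setIntegral_mul_nonpos_of_symm_of_concaveOn (g := fun x => c * q x) hp_symm
      (fun x hx => by rw [← hψ_symm x hx, ← hq_symm x hx]) hp_mono (hψ_conc.sub (hq_conv.smul hc))
      (fun x hx => mul_nonneg hc (hq_nonneg x (hhalf hx))) (by simpa using hq_lim.const_mul c)
      (fun x hx => by linarith [hψ_nonneg x (hhalf hx)]) (hψ_int.sub (hq_int.const_mul c))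
      hpψq_int ?_
    rw [integral_sub hψ_int (hq_int.const_mul c), integral_const_mul, hq_one, mul_one, sub_self]
  calc ∫ x in Ioo (0:ℝ) 1, p x * ψ x
      = (∫ x in Ioo (0:ℝ) 1, p x * (ψ x - c * q x)) + c * ∫ x in Ioo (0:ℝ) 1, p x * q x := by
        rw [← integral_const_mul, ← integral_add hpψq_int (hpq_int.const_mul c)]
        congr 1 with x
        ring
    _ ≤ c * ∫ x in Ioo (0:ℝ) 1, p x * q x := by linarith

theorem generalized_clausing_general (p q φ : ℝ → ℝ)
    (hq_nonneg : ∀ x ∈ Ioo (0:ℝ) 1, 0 ≤ q x)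
    (hq_int : IntegrableOn q (Ioo 0 1))
    (hp_symm : ∀ x ∈ Ioo (0:ℝ) 1, p x = p (1 - x))
    (hq_symm : ∀ x ∈ Ioo (0:ℝ) 1, q x = q (1 - x))
    (hp_mono : MonotoneOn p (Ioc 0 (1/2)))
    (hq_conv : ConvexOn ℝ (Ioc 0 (1/2)) q)
    (hq_lim : Tendsto q (nhdsWithin 0 (Ioi 0)) (nhds 0))
    (hq_one : ∫ x in Ioo (0:ℝ) 1, q x = 1)
    (hφ_conc : ConcaveOn ℝ (Icc 0 1) φ)
    (hφ_int : IntegrableOn φ (Ioo 0 1))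
    (hφ_ends : 0 ≤ φ 0 + φ 1)
    (hpφ_int : IntegrableOn (fun x => p x * φ x) (Ioo 0 1))
    (hpq_int : IntegrableOn (fun x => p x * q x) (Ioo 0 1)) :
    ∫ x in Ioo (0:ℝ) 1, p x * φ x ≤
      (∫ x in Ioo (0:ℝ) 1, φ x) * ∫ x in Ioo (0:ℝ) 1, p x * q x := by
  have hψ := setIntegral_mul_le_of_symm_of_concaveOn hp_symm hq_symm
    (fun x _ => (symmetrize_one_sub φ x).symm) hp_mono hq_conv
    ((concaveOn_symmetrize hφ_conc).subset (fun x hx => ⟨hx.1.le, hx.2.trans (by norm_num)⟩)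
      (convex_Ioc _ _))
    hq_nonneg (fun x hx => symmetrize_nonneg hφ_conc hφ_ends (Ioo_subset_Icc_self hx)) hq_lim
    hq_one hq_int (integrableOn_symmetrize hφ_int) hpq_int (hpφ_int.mul_symmetrize hp_symm)
  rwa [integral_mul_symmetrize hp_symm hpφ_int, integral_symmetrize hφ_int] at hψ

/-- **Generalized Clausing inequality.** Let `p, q` be nonnegative integrable functions on
`(0,1)`, both symmetric, with `p` non-decreasing on `(0, 1/2]`, `q` convex on `(0, 1/2]`,
`q(x) → 0` as `x → 0⁺`, `q(0) = 0`, and `∫₀¹ q = 1`. Then for every concave integrable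
`φ : [0,1] → ℝ` with `φ(0) + φ(1) ≥ 0` (products assumed integrable),
`∫₀¹ p φ ≤ (∫₀¹ φ) (∫₀¹ p q)`. -/
theorem generalized_clausing (p q φ : ℝ → ℝ)
    (hp_nonneg : ∀ x ∈ Ioo (0:ℝ) 1, 0 ≤ p x)
    (hq_nonneg : ∀ x ∈ Ioo (0:ℝ) 1, 0 ≤ q x)
    (hp_int : IntegrableOn p (Ioo 0 1))
    (hq_int : IntegrableOn q (Ioo 0 1))
    (hp_symm : ∀ x ∈ Ioo (0:ℝ) 1, p x = p (1 - x))
    (hq_symm : ∀ x ∈ Ioo (0:ℝ) 1, q x = q (1 - x))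
    (hp_mono : MonotoneOn p (Ioc 0 (1/2)))
    (hq_conv : ConvexOn ℝ (Ioc 0 (1/2)) q)
    (hq_lim : Tendsto q (nhdsWithin 0 (Ioi 0)) (nhds 0))
    (hq_zero : q 0 = 0)
    (hq_one : ∫ x in Ioo (0:ℝ) 1, q x = 1)
    (hφ_conc : ConcaveOn ℝ (Icc 0 1) φ)
    (hφ_int : IntegrableOn φ (Ioo 0 1))
    (hφ_ends : 0 ≤ φ 0 + φ 1)
    (hpφ_int : IntegrableOn (fun x => p x * φ x) (Ioo 0 1))
    (hpq_int : IntegrableOn (fun x => p x * q x) (Ioo 0 1)) :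
    ∫ x in Ioo (0:ℝ) 1, p x * φ x ≤
      (∫ x in Ioo (0:ℝ) 1, φ x) * ∫ x in Ioo (0:ℝ) 1, p x * q x :=
  generalized_clausing_general p q φ hq_nonneg hq_int hp_symm hq_symm hp_mono hq_conv hq_lim hq_one
    hφ_conc hφ_int hφ_ends hpφ_int hpq_int
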